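/- arXiv:1712.05278 — 5 statements merged into one kernel-verified Lean document; each statement's English description precedes it below -/
import Mathlib

section
/- (Abel-type Tauberian bound) For a bounded sequence c : ℕ → ℝ, limsup_{λ→1⁻} (1-λ) Σ_{i=0}^∞ λ^i c(i) ≤ limsup_{T→∞} (1/(T+1)) Σ_{i=0}^T c(i). -/
/-!
Multiplying `∑ λⁱ cᵢ` by the geometric series `∑ λʲ = (1 - λ)⁻¹` (a Cauchy product) writes the
Abel mean `(1 - λ) ∑ λⁱ cᵢ` as the average of the Cesàro means `Aₙ` against the weights
`(1 - λ)² (n + 1) λⁿ`, which are nonnegative and sum to `1`. If `Aₙ < L` for all `n ≥ N`, this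
average is at most `L` plus the contribution of the first `N` means, which is `O((1 - λ)²)`.
-/

open Filter Finset Topology

noncomputable def cesaroMean (c : ℕ → ℝ) (T : ℕ) : ℝ := (∑ i ∈ range (T + 1), c i) / (T + 1)

noncomputable def abelMean (c : ℕ → ℝ) (l : ℝ) : ℝ := (1 - l) * ∑' i, l ^ i * c i

section

variable {c : ℕ → ℝ} {M l : ℝ}

theorem abs_cesaroMean_le (hM : ∀ i, |c i| ≤ M) (T : ℕ) : |cesaroMean c T| ≤ M := by
  have hT : (0 : ℝ) < T + 1 := by positivity
  rw [cesaroMean, abs_div, abs_of_pos hT, div_le_iff₀ hT]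
  calc |∑ i ∈ range (T + 1), c i| ≤ ∑ i ∈ range (T + 1), |c i| := abs_sum_le_sum_abs _ _
    _ ≤ ∑ _i ∈ range (T + 1), M := sum_le_sum fun i _ => hM i
    _ = M * (T + 1) := by simp [mul_comm]

theorem norm_pow_mul_le (hM : ∀ i, |c i| ≤ M) (i : ℕ) : ‖l ^ i * c i‖ ≤ M * |l| ^ i := by
  rw [Real.norm_eq_abs, abs_mul, abs_pow, mul_comm]
  exact mul_le_mul_of_nonneg_right (hM i) (by positivity)

theorem summable_norm_pow_mul (hM : ∀ i, |c i| ≤ M) (hl : |l| < 1) :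
    Summable fun i => ‖l ^ i * c i‖ :=
  .of_nonneg_of_le (fun _ => norm_nonneg _) (norm_pow_mul_le hM)
    ((summable_geometric_of_lt_one (abs_nonneg l) hl).mul_left M)

theorem abs_abelMean_le (hM : ∀ i, |c i| ≤ M) (hl0 : 0 ≤ l) (hl1 : l < 1) :
    |abelMean c l| ≤ M := by
  have hl : |l| < 1 := by rwa [abs_of_nonneg hl0]
  have hsum : |∑' i, l ^ i * c i| ≤ M * (1 - l)⁻¹ :=
    calc |∑' i, l ^ i * c i| ≤ ∑' i, ‖l ^ i * c i‖ :=
          norm_tsum_le_tsum_norm (summable_norm_pow_mul hM hl)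
      _ ≤ ∑' i : ℕ, M * |l| ^ i :=
          (summable_norm_pow_mul hM hl).tsum_le_tsum (norm_pow_mul_le hM)
            ((summable_geometric_of_lt_one (abs_nonneg l) hl).mul_left M)
      _ = M * (1 - l)⁻¹ := by
          rw [tsum_mul_left, abs_of_nonneg hl0, tsum_geometric_of_lt_one hl0 hl1]
  have h1l : 0 < 1 - l := sub_pos.2 hl1
  rw [abelMean, abs_mul, abs_of_pos h1l]
  calc (1 - l) * |∑' i, l ^ i * c i| ≤ (1 - l) * (M * (1 - l)⁻¹) := by gcongr
    _ = M := by field_simp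

theorem tsum_pow_mul_sum_range (hM : ∀ i, |c i| ≤ M) (hl : |l| < 1) :
    ∑' n, l ^ n * ∑ i ∈ range (n + 1), c i = (∑' i, l ^ i * c i) / (1 - l) := by
  have hgeo : Summable fun j => ‖l ^ j‖ := by
    simpa [norm_pow] using summable_geometric_of_lt_one (abs_nonneg l) hl
  rw [div_eq_mul_inv, ← tsum_geometric_of_abs_lt_one hl,
    tsum_mul_tsum_eq_tsum_sum_range_of_summable_norm (summable_norm_pow_mul hM hl) hgeo]
  refine tsum_congr fun n => ?_
  rw [mul_sum]
  refine sum_congr rfl fun i hi => ?_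
  rw [mul_right_comm, ← pow_add, Nat.add_sub_cancel' (mem_range_succ_iff.1 hi), mul_comm]

theorem hasSum_succ_mul_geometric (hl : |l| < 1) :
    HasSum (fun n : ℕ => ((n : ℝ) + 1) * l ^ n) ((1 - l) ^ 2)⁻¹ := by
  have h := hasSum_choose_mul_geometric_of_norm_lt_one 1 (r := l) (by rwa [Real.norm_eq_abs])
  simpa [one_div] using h

theorem abelMean_eq_tsum_cesaroMean (hM : ∀ i, |c i| ≤ M) (hl : |l| < 1) :
    abelMean c l = (1 - l) ^ 2 * ∑' n : ℕ, ((n : ℝ) + 1) * l ^ n * cesaroMean c n := by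
  have h1l : 1 - l ≠ 0 := sub_ne_zero.2 (abs_lt.1 hl).2.ne'
  have hterm (n : ℕ) :
      ((n : ℝ) + 1) * l ^ n * cesaroMean c n = l ^ n * ∑ i ∈ range (n + 1), c i := by
    rw [cesaroMean]
    field_simp
  rw [tsum_congr hterm, tsum_pow_mul_sum_range hM hl, abelMean]
  field_simp

theorem tsum_le_sum_range_of_nonpos {f : ℕ → ℝ} {N : ℕ} (hf : Summable f)
    (hN : ∀ n ≥ N, f n ≤ 0) : ∑' n, f n ≤ ∑ n ∈ range N, f n := by
  rw [← hf.sum_add_tsum_nat_add N]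
  exact add_le_of_nonpos_right (tsum_nonpos fun n => hN _ (Nat.le_add_left N n))

theorem one_sub_sq_mul_tsum_succ_mul_pow_le {a : ℕ → ℝ} {K L : ℝ} {N : ℕ} (ha : ∀ n, |a n| ≤ K)
    (hN : ∀ n ≥ N, a n ≤ L) (hl0 : 0 ≤ l) (hl1 : l < 1) :
    (1 - l) ^ 2 * ∑' n : ℕ, ((n : ℝ) + 1) * l ^ n * a n ≤
      L + (1 - l) ^ 2 * ∑ n ∈ range N, ((n : ℝ) + 1) * |a n - L| := by
  have hw := hasSum_succ_mul_geometric (l := l) (by rwa [abs_of_nonneg hl0])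
  have hwa : Summable fun n : ℕ => ((n : ℝ) + 1) * l ^ n * a n :=
    .of_norm_bounded (hw.summable.mul_right K) fun n => by
      rw [Real.norm_eq_abs, abs_mul, abs_of_nonneg (by positivity)]
      exact mul_le_mul_of_nonneg_left (ha n) (by positivity)
  have hsum_excess : Summable fun n : ℕ => ((n : ℝ) + 1) * l ^ n * (a n - L) :=
    (hwa.sub (hw.mul_left L).summable).congr fun n => by ring
  have hsplit : ∑' n : ℕ, ((n : ℝ) + 1) * l ^ n * a n =
      L * ((1 - l) ^ 2)⁻¹ + ∑' n : ℕ, ((n : ℝ) + 1) * l ^ n * (a n - L) := by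
    rw [← (hw.mul_left L).tsum_eq, ← (hw.mul_left L).summable.tsum_add hsum_excess]
    exact tsum_congr fun n => by ring
  have hexcess : ∑' n : ℕ, ((n : ℝ) + 1) * l ^ n * (a n - L) ≤
      ∑ n ∈ range N, ((n : ℝ) + 1) * |a n - L| := by
    refine (tsum_le_sum_range_of_nonpos hsum_excess fun n hn => ?_).trans
      (sum_le_sum fun n _ => ?_)
    · exact mul_nonpos_of_nonneg_of_nonpos (by positivity) (sub_nonpos.2 (hN n hn))
    · calc ((n : ℝ) + 1) * l ^ n * (a n - L) ≤ ((n : ℝ) + 1) * l ^ n * |a n - L| :=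
            mul_le_mul_of_nonneg_left (le_abs_self _) (by positivity)
        _ ≤ ((n : ℝ) + 1) * |a n - L| :=
            mul_le_mul_of_nonneg_right
              (mul_le_of_le_one_right (by positivity) (pow_le_one₀ hl0 hl1.le)) (abs_nonneg _)
  have h1l : (1 - l) ^ 2 ≠ 0 := by nlinarith
  rw [hsplit, mul_add, mul_left_comm, mul_inv_cancel₀ h1l, mul_one]
  gcongr

theorem abelMean_le_of_cesaroMean_le (hM : ∀ i, |c i| ≤ M) {L : ℝ} {N : ℕ}
    (hN : ∀ n ≥ N, cesaroMean c n ≤ L) (hl0 : 0 ≤ l) (hl1 : l < 1) :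
    abelMean c l ≤ L + (1 - l) ^ 2 * ∑ n ∈ range N, ((n : ℝ) + 1) * |cesaroMean c n - L| := by
  rw [abelMean_eq_tsum_cesaroMean hM (abs_lt.2 ⟨by linarith, hl1⟩)]
  exact one_sub_sq_mul_tsum_succ_mul_pow_le (abs_cesaroMean_le hM) hN hl0 hl1

end

/-- Abel-type Tauberian bound: for a bounded sequence `c`,
`limsup_{λ→1⁻} (1-λ) ∑ λ^i c i ≤ limsup_T (1/(T+1)) ∑_{i=0}^T c i`. -/
theorem stmt_3 (c : ℕ → ℝ) (M : ℝ) (hM : ∀ i, |c i| ≤ M) :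
    Filter.limsup (fun l : ℝ => (1 - l) * (∑' i, l ^ i * c i))
        (nhdsWithin 1 (Set.Ico (0 : ℝ) 1)) ≤
      Filter.limsup (fun T : ℕ => (∑ i ∈ Finset.range (T + 1), c i) / (T + 1))
        Filter.atTop := by
  change limsup (abelMean c) (𝓝[Set.Ico 0 1] 1) ≤ limsup (cesaroMean c) atTop
  have := right_nhdsWithin_Ico_neBot (zero_lt_one' ℝ)
  refine le_of_forall_gt_imp_ge_of_dense fun L hL => ?_
  obtain ⟨N, hN⟩ := eventually_atTop.1 <| eventually_lt_of_limsup_lt hL <|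
    isBoundedUnder_of ⟨M, fun T => (abs_le.1 (abs_cesaroMean_le hM T)).2⟩
  set C := ∑ n ∈ range N, ((n : ℝ) + 1) * |cesaroMean c n - L|
  have hlim : Tendsto (fun l : ℝ => L + (1 - l) ^ 2 * C) (𝓝[Set.Ico 0 1] 1) (𝓝 L) :=
    ((by fun_prop : Continuous fun l : ℝ => L + (1 - l) ^ 2 * C).tendsto' 1 L
      (by simp)).mono_left nhdsWithin_le_nhds
  have hcobdd : IsCoboundedUnder (· ≤ ·) (𝓝[Set.Ico 0 1] 1) (abelMean c) :=
    isCoboundedUnder_le_of_eventually_le _ <| eventually_nhdsWithin_of_forall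
      fun l ⟨hl0, hl1⟩ => (abs_le.1 (abs_abelMean_le hM hl0 hl1)).1
  calc limsup (abelMean c) (𝓝[Set.Ico 0 1] 1)
      ≤ limsup (fun l : ℝ => L + (1 - l) ^ 2 * C) (𝓝[Set.Ico 0 1] 1) :=
        limsup_le_limsup (eventually_nhdsWithin_of_forall fun l ⟨hl0, hl1⟩ =>
          abelMean_le_of_cesaroMean_le hM (fun n hn => (hN n hn).le) hl0 hl1)
          hcobdd hlim.isBoundedUnder_le
    _ = L := hlim.limsup_eq
end

section
/- If the Cesàro averages (1/(T+1)) Σ_{i=0}^T c(i) of a bounded sequence c converge to a limit L, then the normalized discounted values (1-λ) Σ_{i=0}^∞ λ^i c(i) converge to L as λ → 1⁻. -/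
/-!
Writing `S n = ∑_{i ≤ n} c i`, a Cauchy product with `∑ λⁿ = (1 - λ)⁻¹` gives
`(1 - λ) ∑ λⁱ c i = ∑ₙ (1 - λ)² (n + 1) λⁿ · S n / (n + 1)`.
The weights `(1 - λ)² (n + 1) λⁿ` are nonnegative, sum to `1`, and each of them tends to `0`
as `λ → 1`; averaging a convergent sequence against such weights preserves its limit
(the easy half of the Silverman–Toeplitz theorem), and here that sequence is the Cesàro means.
-/

open Filter Finset Topology

lemma exists_abs_le_of_tendsto {a : ℕ → ℝ} {L : ℝ} (ha : Tendsto a atTop (𝓝 L)) :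
    ∃ B, ∀ n, |a n| ≤ B := by
  obtain ⟨B, hB⟩ := isBounded_iff_forall_norm_le.1 (Metric.isBounded_range_of_tendsto a ha)
  exact ⟨B, fun n => hB _ (Set.mem_range_self n)⟩

section Toeplitz

variable {α : Type*} {F : Filter α} {w : α → ℕ → ℝ}

lemma tendsto_tsum_mul_of_tendsto_zero (hw : ∀ᶠ x in F, ∀ n, 0 ≤ w x n)
    (hw_sum : ∀ᶠ x in F, HasSum (w x) 1) (hw_zero : ∀ n, Tendsto (fun x => w x n) F (𝓝 0))
    {b : ℕ → ℝ} (hb : Tendsto b atTop (𝓝 0)) :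
    Tendsto (fun x => ∑' n, w x n * b n) F (𝓝 0) := by
  obtain ⟨B, hB⟩ := exists_abs_le_of_tendsto hb
  rw [Metric.tendsto_nhds]
  intro ε hε
  obtain ⟨N, hN⟩ : ∃ N, ∀ n ≥ N, |b n| ≤ ε / 2 := by
    simpa only [Real.dist_eq, sub_zero] using
      (Metric.tendsto_atTop.1 hb (ε / 2) (half_pos hε)).imp fun N h n hn => (h n hn).le
  have hhead : Tendsto (fun x => ∑ n ∈ range N, B * w x n) F (𝓝 0) := by
    simpa using tendsto_finsetSum (range N) fun n _ => (hw_zero n).const_mul B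
  filter_upwards [hw, hw_sum, hhead.eventually (gt_mem_nhds (half_pos hε))]
    with x hpos hsum hsmall
  set g : ℕ → ℝ := fun n => if n ∈ range N then B * w x n else 0
  have hg : HasSum g (∑ n ∈ range N, B * w x n) := by
    rw [← sum_congr rfl fun n hn => if_pos hn]
    exact hasSum_sum_of_ne_finset_zero fun n hn => if_neg hn
  have hbound : ∀ n, ‖w x n * b n‖ ≤ ε / 2 * w x n + g n := by
    intro n
    rw [norm_mul, Real.norm_of_nonneg (hpos n), Real.norm_eq_abs]
    by_cases hn : n ∈ range N
    · simp only [g, if_pos hn]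
      linarith [mul_le_mul_of_nonneg_left (hB n) (hpos n), mul_nonneg (half_pos hε).le (hpos n)]
    · simp only [g, if_neg hn, add_zero, mul_comm (ε / 2)]
      exact mul_le_mul_of_nonneg_left (hN n (by simpa using hn)) (hpos n)
  rw [dist_zero_right]
  calc ‖∑' n, w x n * b n‖ ≤ ε / 2 * 1 + ∑ n ∈ range N, B * w x n :=
        tsum_of_norm_bounded ((hsum.mul_left _).add hg) hbound
    _ < ε := by linarith

lemma tendsto_tsum_mul_of_tendsto (hw : ∀ᶠ x in F, ∀ n, 0 ≤ w x n)
    (hw_sum : ∀ᶠ x in F, HasSum (w x) 1) (hw_zero : ∀ n, Tendsto (fun x => w x n) F (𝓝 0))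
    {a : ℕ → ℝ} {L : ℝ} (ha : Tendsto a atTop (𝓝 L)) :
    Tendsto (fun x => ∑' n, w x n * a n) F (𝓝 L) := by
  have hb : Tendsto (fun n => a n - L) atTop (𝓝 0) := by simpa using ha.sub_const L
  obtain ⟨B, hB⟩ := exists_abs_le_of_tendsto hb
  have hshift := (tendsto_tsum_mul_of_tendsto_zero hw hw_sum hw_zero hb).const_add L
  rw [add_zero] at hshift
  refine hshift.congr' ?_
  filter_upwards [hw, hw_sum] with x hpos hsum
  have hsummable : Summable fun n => w x n * (a n - L) :=
    Summable.of_norm_bounded (hsum.summable.mul_right B) fun n => by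
      rw [norm_mul, Real.norm_of_nonneg (hpos n), Real.norm_eq_abs]
      exact mul_le_mul_of_nonneg_left (hB n) (hpos n)
  have hsplit := (hsum.mul_right L).add hsummable.hasSum
  rw [one_mul] at hsplit
  rw [← hsplit.tsum_eq]
  exact tsum_congr fun n => by ring

end Toeplitz

lemma tsum_pow_mul_sum_range_succ {𝕜 : Type*} [NormedField 𝕜] [CompleteSpace 𝕜] {l : 𝕜}
    (hl : ‖l‖ < 1) {c : ℕ → 𝕜} (hc : Summable fun i => ‖l ^ i * c i‖) :
    ∑' n, l ^ n * ∑ i ∈ range (n + 1), c i = (1 - l)⁻¹ * ∑' i, l ^ i * c i := by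
  have hgeom : Summable fun i => ‖l ^ i‖ := by
    simpa only [norm_pow] using summable_geometric_of_lt_one (norm_nonneg _) hl
  rw [← tsum_geometric_of_norm_lt_one hl, mul_comm,
    tsum_mul_tsum_eq_tsum_sum_range_of_summable_norm hc hgeom]
  refine tsum_congr fun n => ?_
  rw [mul_sum]
  refine sum_congr rfl fun i hi => ?_
  rw [mul_right_comm, ← pow_add, Nat.add_sub_cancel' (Nat.lt_succ_iff.1 (mem_range.1 hi))]

noncomputable def abelWeight (l : ℝ) (n : ℕ) : ℝ := (1 - l) ^ 2 * ((n + 1) * l ^ n)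

lemma abelWeight_nonneg {l : ℝ} (hl : 0 ≤ l) (n : ℕ) : 0 ≤ abelWeight l n :=
  mul_nonneg (sq_nonneg _) (mul_nonneg (by positivity) (pow_nonneg hl n))

lemma hasSum_abelWeight {l : ℝ} (hl : |l| < 1) : HasSum (abelWeight l) 1 := by
  have hl' : (1 : ℝ) - l ≠ 0 := by linarith [le_abs_self l]
  have h := (hasSum_choose_mul_geometric_of_norm_lt_one 1 (r := l)
    (by rwa [Real.norm_eq_abs])).mul_left ((1 - l) ^ 2)
  rw [one_add_one_eq_two, mul_one_div_cancel (pow_ne_zero 2 hl')] at h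
  refine h.congr_fun fun n => ?_
  simp [abelWeight]

lemma tendsto_abelWeight (n : ℕ) : Tendsto (fun l => abelWeight l n) (𝓝 1) (𝓝 0) :=
  Continuous.tendsto' (by unfold abelWeight; fun_prop) 1 0 (by simp [abelWeight])

lemma one_sub_mul_tsum_eq_tsum_abelWeight_mul {l : ℝ} (hl : |l| < 1) {c : ℕ → ℝ}
    (hc : Summable fun i => ‖l ^ i * c i‖) :
    (1 - l) * ∑' i, l ^ i * c i =
      ∑' n, abelWeight l n * ((∑ i ∈ range (n + 1), c i) / (n + 1)) := by
  have hl' : (1 : ℝ) - l ≠ 0 := by linarith [le_abs_self l]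
  calc (1 - l) * ∑' i, l ^ i * c i
      = (1 - l) ^ 2 * ∑' n, l ^ n * ∑ i ∈ range (n + 1), c i := by
        rw [tsum_pow_mul_sum_range_succ (by rwa [Real.norm_eq_abs]) hc]
        field_simp
    _ = _ := by
        rw [← tsum_mul_left]
        refine tsum_congr fun n => ?_
        simp only [abelWeight]
        field_simp

/-- If the Cesàro averages of a bounded sequence `c` converge to
`L`, then the normalized discounted values converge to `L` as `λ → 1⁻`. -/
theorem stmt_4 (c : ℕ → ℝ) (M : ℝ) (hM : ∀ i, |c i| ≤ M) (L : ℝ)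
    (hces : Filter.Tendsto
      (fun T : ℕ => (∑ i ∈ Finset.range (T + 1), c i) / (T + 1))
      Filter.atTop (nhds L)) :
    Filter.Tendsto (fun l : ℝ => (1 - l) * (∑' i, l ^ i * c i))
      (nhdsWithin 1 (Set.Ico (0 : ℝ) 1)) (nhds L) := by
  have hIco : ∀ᶠ l in 𝓝[Set.Ico 0 1] (1 : ℝ), 0 ≤ l ∧ |l| < 1 :=
    eventually_nhdsWithin_of_forall fun l ⟨h0, h1⟩ => ⟨h0, by rwa [abs_of_nonneg h0]⟩
  refine (tendsto_tsum_mul_of_tendsto (hIco.mono fun l hl => abelWeight_nonneg hl.1)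
    (hIco.mono fun l hl => hasSum_abelWeight hl.2)
    (fun n => (tendsto_abelWeight n).mono_left nhdsWithin_le_nhds) hces).congr' ?_
  filter_upwards [hIco] with l ⟨h0, hl⟩
  have hc : Summable fun i => ‖l ^ i * c i‖ :=
    ((summable_geometric_of_lt_one h0 (lt_of_abs_lt hl)).mul_right M).of_nonneg_of_le
      (fun _ => norm_nonneg _) fun i => by
        rw [norm_mul, norm_pow, Real.norm_of_nonneg h0, Real.norm_eq_abs]
        exact mul_le_mul_of_nonneg_left (hM i) (pow_nonneg h0 i)
  exact (one_sub_mul_tsum_eq_tsum_abelWeight_mul hl hc).symm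
end

section
/- The composition of two feedback refinement relations is a feedback refinement relation: if Q₁ is a feedback refinement relation from S₁ to S₂ and Q₂ is one from S₂ to S₃, then the relational composition Q₂ ∘ Q₁ is a feedback refinement relation from S₁ to S₃, provided the input alphabet of S₃ is contained in that of S₂. -/
/-- A simple system `S = (X, X₀, U, F)`: initial states `X0`, input alphabet
`Uset` (a subset of a common input universe `U`), and a set-valued transition
function `F`. -/
structure SimpleSystem (X U : Type*) where
  X0 : Set X
  Uset : Set U
  F : X → U → Set X

/-- `Q` is a feedback refinement relation from `S₁` to `S₂` (with `U₂ ⊆ U₁`):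
`Q` is strict, and for all `u ∈ U₂` and `(x₁,x₂) ∈ Q`:
(i) `x₁ ∈ X₀¹ → x₂ ∈ X₀²`, and
(ii) `F₂(x₂,u) ≠ ∅` implies `F₁(x₁,u) ≠ ∅` and `Q(F₁(x₁,u)) ⊆ F₂(x₂,u)`. -/
def IsFRR {X1 X2 U : Type*} (S1 : SimpleSystem X1 U) (S2 : SimpleSystem X2 U)
    (Q : Set (X1 × X2)) : Prop :=
  S2.Uset ⊆ S1.Uset ∧
  (∀ x1, ∃ x2, (x1, x2) ∈ Q) ∧
  ∀ u ∈ S2.Uset, ∀ x1 x2, (x1, x2) ∈ Q →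
    (x1 ∈ S1.X0 → x2 ∈ S2.X0) ∧
    ((S2.F x2 u).Nonempty →
      (S1.F x1 u).Nonempty ∧
      ∀ x1' ∈ S1.F x1 u, ∀ x2', (x1', x2') ∈ Q → x2' ∈ S2.F x2 u)

/-- the relational composition of two feedback refinement
relations is a feedback refinement relation, provided the input alphabet of
`S₃` is contained in that of `S₂`. -/
theorem stmt_11 {X1 X2 X3 U : Type*}
    (S1 : SimpleSystem X1 U) (S2 : SimpleSystem X2 U) (S3 : SimpleSystem X3 U)
    (Q1 : Set (X1 × X2)) (Q2 : Set (X2 × X3))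
    (h1 : IsFRR S1 S2 Q1) (h2 : IsFRR S2 S3 Q2)
    (hU : S3.Uset ⊆ S2.Uset) :
    IsFRR S1 S3 {p : X1 × X3 | ∃ x2, (p.1, x2) ∈ Q1 ∧ (x2, p.2) ∈ Q2} := by
  obtain ⟨hU1, hs1, hm1⟩ := h1
  obtain ⟨hU2, hs2, hm2⟩ := h2
  refine ⟨hU2.trans hU1, ?_, ?_⟩
  · intro x1
    obtain ⟨x2, hx2⟩ := hs1 x1
    obtain ⟨x3, hx3⟩ := hs2 x2
    exact ⟨x3, x2, hx2, hx3⟩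
  · intro u hu x1 x3 ⟨x2, hq1, hq2⟩
    have m1 := hm1 u (hU hu) x1 x2 hq1
    have m2 := hm2 u hu x2 x3 hq2
    refine ⟨fun h0 => (m2.1 (m1.1 h0)), fun hne3 => ?_⟩
    have h2 := m2.2 hne3
    have h1 := m1.2 h2.1
    refine ⟨h1.1, ?_⟩
    rintro x1' hx1' x3' ⟨x2', hq1', hq2'⟩
    exact h2.2 x2' (h1.2 x1' hx1' x2' hq1') x3' hq2'
end

section
/- Behavior inclusion for refined safety controllers: if Q is a feedback refinement relation from S to Ŝ, Ẑ = {(u, x̂) | {u} × x̂ ⊆ Z} is the abstract safety specification, and K̂ solves the abstract safety problem (Ŝ, Ẑ), then the refined controller K := K̂ ∘ Q solves the concrete safety problem (S, Z), i.e., every behavior of the closed loop K × S lies in Z^ℕ. -/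
/-- A controller `K : X ⇉ U` solves the safety problem `(S, Z)`: it only issues
admissible, non-blocking inputs, and every infinite closed-loop input/state
sequence stays in `Z`. -/
def Solves {X U : Type*} (S : SimpleSystem X U) (Z : Set (U × X)) (K : X → Set U) : Prop :=
  (∀ x, ∀ u ∈ K x, u ∈ S.Uset ∧ (S.F x u).Nonempty) ∧
  ∀ u : ℕ → U, ∀ x : ℕ → X, x 0 ∈ S.X0 →
    (∀ t, u t ∈ K (x t) ∧ x (t + 1) ∈ S.F (x t) (u t)) →
    ∀ t, (u t, x t) ∈ Z

/-- if `Q` is a feedback refinement relation from `S` to the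
symbolic model `Ŝ` (whose states are cells, i.e. subsets of `X`, with `Q` the
set-membership relation), `Ẑ = {(u,x̂) ∣ {u} × x̂ ⊆ Z}` and `K̂` solves
`(Ŝ, Ẑ)`, then the refined controller `K = K̂ ∘ Q` solves `(S, Z)`. -/
theorem stmt_12 {X U : Type*} (S : SimpleSystem X U) (Shat : SimpleSystem (Set X) U)
    (Q : Set (X × Set X)) (hQ : IsFRR S Shat Q)
    (hQmem : ∀ x xhat, (x, xhat) ∈ Q → x ∈ xhat)
    (Z : Set (U × X)) (Khat : Set X → Set U)
    (hKhat : Solves Shat {p : U × Set X | ∀ x ∈ p.2, (p.1, x) ∈ Z} Khat) :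
    Solves S Z (fun x => {u | ∃ xhat, (x, xhat) ∈ Q ∧ u ∈ Khat xhat}) := by
  obtain ⟨hUsub, hsurj, hfrr⟩ := hQ
  obtain ⟨hKadm, hKsafe⟩ := hKhat
  constructor
  · rintro x u ⟨xhat, hxQ, hu⟩
    obtain ⟨huU, hne⟩ := hKadm xhat u hu
    exact ⟨hUsub huU, ((hfrr u huU x xhat hxQ).2 hne).1⟩
  · intro u x hx0 hloop
    -- choose abstract states
    have hwit : ∀ t, ∃ xhat, (x t, xhat) ∈ Q ∧ u t ∈ Khat xhat := fun t => (hloop t).1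
    set xhat : ℕ → Set X := fun t => Classical.choose (hwit t) with hxhat
    have hQt : ∀ t, (x t, xhat t) ∈ Q := fun t => (Classical.choose_spec (hwit t)).1
    have hKt : ∀ t, u t ∈ Khat (xhat t) := fun t => (Classical.choose_spec (hwit t)).2
    have hUt : ∀ t, u t ∈ Shat.Uset := fun t => (hKadm _ _ (hKt t)).1
    have hNt : ∀ t, (Shat.F (xhat t) (u t)).Nonempty := fun t => (hKadm _ _ (hKt t)).2
    have hloop' : ∀ t, u t ∈ Khat (xhat t) ∧ xhat (t + 1) ∈ Shat.F (xhat t) (u t) := by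
      intro t
      refine ⟨hKt t, ?_⟩
      exact ((hfrr (u t) (hUt t) (x t) (xhat t) (hQt t)).2 (hNt t)).2 (x (t + 1))
        (hloop t).2 (xhat (t + 1)) (hQt (t + 1))
    have h0 : xhat 0 ∈ Shat.X0 := (hfrr (u 0) (hUt 0) (x 0) (xhat 0) (hQt 0)).1 hx0
    exact fun t => hKsafe u xhat h0 hloop' t (x t) (hQmem _ _ (hQt t))
end

section
/- Cost transfer under feedback refinement: let Q be a feedback refinement relation from S to Ŝ and suppose c(u,x,u') ≤ ĉ(u,x̂,u') whenever (x,x̂) ∈ Q. Then for every infinite closed-loop trajectory (u,x) of the concrete system and any corresponding abstract trajectory (u,x̂) with (x(t),x̂(t)) ∈ Q for all t, and every λ ∈ [0,1), the normalized discounted cost of the concrete trajectory is at most that of the abstract trajectory; consequently the worst-case discounted cost of the refined implementation is at most that of the abstract implementation. -/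
lemma stmt14_summable (f : ℕ → ℝ) (M : ℝ) (hb : ∀ t, |f t| ≤ M)
    (l : ℝ) (hl0 : 0 ≤ l) (hl1 : l < 1) :
    Summable (fun t => l ^ t * f t) := by
  apply Summable.of_abs
  apply Summable.of_nonneg_of_le (fun t => abs_nonneg _) (fun t => ?_)
    ((summable_geometric_of_lt_one hl0 hl1).mul_right M)
  rw [abs_mul, abs_pow, abs_of_nonneg hl0]
  exact mul_le_mul_of_nonneg_left (hb t) (pow_nonneg hl0 t)

lemma stmt14_bound (f : ℕ → ℝ) (M : ℝ) (hb : ∀ t, |f t| ≤ M)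
    (l : ℝ) (hl0 : 0 ≤ l) (hl1 : l < 1) :
    (1 - l) * (∑' t, l ^ t * f t) ≤ M := by
  have hs : Summable (fun t => l ^ t * f t) := stmt14_summable f M hb l hl0 hl1
  have h1 : (∑' t, l ^ t * f t) ≤ ∑' t : ℕ, l ^ t * M := by
    apply Summable.tsum_le_tsum (fun t => ?_) hs ((summable_geometric_of_lt_one hl0 hl1).mul_right M)
    exact mul_le_mul_of_nonneg_left ((abs_le.mp (hb t)).2) (pow_nonneg hl0 t)
  have h2 : (∑' t : ℕ, l ^ t * M) = M / (1 - l) := by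
    rw [tsum_mul_right, tsum_geometric_of_lt_one hl0 hl1]; ring
  have hl : 0 < 1 - l := by linarith
  calc (1 - l) * (∑' t, l ^ t * f t) ≤ (1 - l) * (M / (1 - l)) := by
        apply mul_le_mul_of_nonneg_left _ hl.le
        rw [← h2]; exact h1
    _ = M := by field_simp

/-- cost transfer under feedback refinement: if
`c(u,x,u') ≤ ĉ(u,x̂,u')` whenever `(x,x̂) ∈ Q` (both costs bounded), then for
every `λ ∈ [0,1)`: the normalized discounted cost of any concrete trajectory is
at most that of any `Q`-related abstract trajectory with the same inputs;
consequently, the worst-case (supremum) discounted cost over the concrete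
closed-loop behaviors is at most the worst case over the abstract behaviors,
provided every concrete behavior has a `Q`-related abstract behavior. -/
theorem stmt_14 {X Xhat U : Type*} (Q : Set (X × Xhat))
    (c : U → X → U → ℝ) (chat : U → Xhat → U → ℝ) (M : ℝ)
    (hcb : ∀ u x u', |c u x u'| ≤ M)
    (hchatb : ∀ u xhat u', |chat u xhat u'| ≤ M)
    (hle : ∀ u u' x xhat, (x, xhat) ∈ Q → c u x u' ≤ chat u xhat u')
    (l : ℝ) (hl0 : 0 ≤ l) (hl1 : l < 1) :
    (∀ (u : ℕ → U) (x : ℕ → X) (xhat : ℕ → Xhat), (∀ t, (x t, xhat t) ∈ Q) →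
      (1 - l) * (∑' t, l ^ t * c (u t) (x t) (u (t + 1))) ≤
        (1 - l) * (∑' t, l ^ t * chat (u t) (xhat t) (u (t + 1)))) ∧
    (∀ (Bconc : Set ((ℕ → U) × (ℕ → X))) (Babs : Set ((ℕ → U) × (ℕ → Xhat))),
      Bconc.Nonempty →
      (∀ τ ∈ Bconc, ∃ σ ∈ Babs, σ.1 = τ.1 ∧ ∀ t, (τ.2 t, σ.2 t) ∈ Q) →
      sSup ((fun τ : (ℕ → U) × (ℕ → X) =>
              (1 - l) * (∑' t, l ^ t * c (τ.1 t) (τ.2 t) (τ.1 (t + 1)))) '' Bconc) ≤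
        sSup ((fun σ : (ℕ → U) × (ℕ → Xhat) =>
              (1 - l) * (∑' t, l ^ t * chat (σ.1 t) (σ.2 t) (σ.1 (t + 1)))) '' Babs)) := by
  have hl : (0:ℝ) < 1 - l := by linarith
  have key : ∀ (u : ℕ → U) (x : ℕ → X) (xhat : ℕ → Xhat), (∀ t, (x t, xhat t) ∈ Q) →
      (1 - l) * (∑' t, l ^ t * c (u t) (x t) (u (t + 1))) ≤
        (1 - l) * (∑' t, l ^ t * chat (u t) (xhat t) (u (t + 1))) := by
    intro u x xhat hQ
    apply mul_le_mul_of_nonneg_left _ hl.le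
    apply Summable.tsum_le_tsum (fun t => ?_)
      (stmt14_summable _ M (fun t => hcb _ _ _) l hl0 hl1)
      (stmt14_summable _ M (fun t => hchatb _ _ _) l hl0 hl1)
    exact mul_le_mul_of_nonneg_left (hle _ _ _ _ (hQ t)) (pow_nonneg hl0 t)
  refine ⟨key, ?_⟩
  intro Bconc Babs hne hcorr
  obtain ⟨τ₀, hτ₀⟩ := hne
  obtain ⟨σ₀, hσ₀, _, hQ₀⟩ := hcorr τ₀ hτ₀
  have hM : 0 ≤ M := le_trans (abs_nonneg _) (hcb (τ₀.1 0) (τ₀.2 0) (τ₀.1 0))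
  have hbdd : BddAbove ((fun σ : (ℕ → U) × (ℕ → Xhat) =>
      (1 - l) * (∑' t, l ^ t * chat (σ.1 t) (σ.2 t) (σ.1 (t + 1)))) '' Babs) := by
    refine ⟨M, ?_⟩
    rintro y ⟨σ, hσ, rfl⟩
    exact stmt14_bound _ M (fun t => hchatb _ _ _) l hl0 hl1
  apply csSup_le (Set.Nonempty.image _ ⟨τ₀, hτ₀⟩)
  rintro y ⟨τ, hτ, rfl⟩
  obtain ⟨σ, hσ, hu, hQτ⟩ := hcorr τ hτ
  calc (1 - l) * (∑' t, l ^ t * c (τ.1 t) (τ.2 t) (τ.1 (t + 1)))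
      ≤ (1 - l) * (∑' t, l ^ t * chat (σ.1 t) (σ.2 t) (σ.1 (t + 1))) := by
        rw [← hu] at *
        exact key σ.1 τ.2 σ.2 hQτ
    _ ≤ _ := le_csSup hbdd ⟨σ, hσ, rfl⟩
end
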